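/- Let E_3 be the two-dimensional complex evolution algebra with structural matrix ((1,1),(−1,−1)) (i.e. e₁e₁ = e₁ + e₂, e₂e₂ = −e₁ − e₂). A linear map P : ℂ² → ℂ² is a Rota–Baxter operator of weight 0 on E_3 if and only if there exists a ∈ ℂ such that P has matrix ((a, a),(−a, −a)) or matrix ((a, −a),(−a, a)). -/

import Mathlib

/-- The evolution-algebra product on `ℂ²` determined by a structural matrix `A`:
`e_i · e_i = a_{i1} e₁ + a_{i2} e₂` and `e₁ · e₂ = e₂ · e₁ = 0`. -/
noncomputable def evMulC (A : Matrix (Fin 2) (Fin 2) ℂ) (x y : Fin 2 → ℂ) : Fin 2 → ℂ :=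
  fun k => x 0 * y 0 * A 0 k + x 1 * y 1 * A 1 k

/-- `P` is a Rota–Baxter operator of weight `lam` on the evolution algebra with structural
matrix `A`: `P(x)·P(y) = P(x·P(y) + P(x)·y + lam x·y)` for all `x, y`. -/
def IsRotaBaxter (A : Matrix (Fin 2) (Fin 2) ℂ) (lam : ℂ)
    (P : (Fin 2 → ℂ) →ₗ[ℂ] (Fin 2 → ℂ)) : Prop :=
  ∀ x y : Fin 2 → ℂ,
    evMulC A (P x) (P y) = P (evMulC A x (P y) + evMulC A (P x) y + lam • evMulC A x y)

/-!
The product of `E₃` is `x · y = ω(x, y) u` with `u = e₁ + e₂` and `ω(x, y) = x₁y₁ - x₂y₂`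
(`splitForm`), so the weight-zero Rota–Baxter identity reads
`ω(Px, Py) u = (ω(x, Py) + ω(Px, y)) Pu`. Testing it on `x = y = u` (an `ω`-isotropic vector)
forces `Pu = p u`, and then on `x = u, y = e₁` forces `p² = 0`. With `Pu = 0` the identity
reduces to the image of `P`, a line spanned by `Pe₁`, being `ω`-isotropic, i.e.
`Pe₁ ∈ ℂ(1, 1) ∪ ℂ(1, -1)`.
-/

section SplitForm

variable {R : Type*} [CommRing R]

def splitForm (x y : Fin 2 → R) : R := x 0 * y 0 - x 1 * y 1

theorem splitForm_self_eq_zero_iff [NoZeroDivisors R] (v : Fin 2 → R) :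
    splitForm v v = 0 ↔ ∃ a : R, v = ![a, a] ∨ v = ![a, -a] := by
  constructor
  · intro h
    have hsq : v 1 ^ 2 = v 0 ^ 2 := by unfold splitForm at h; linear_combination -h
    refine ⟨v 0, (sq_eq_sq_iff_eq_or_eq_neg.mp hsq).imp (fun h1 => ?_) (fun h1 => ?_)⟩ <;>
      ext i <;> fin_cases i <;> simp [h1]
  · rintro ⟨a, rfl | rfl⟩ <;> simp [splitForm]

end SplitForm

namespace E3

abbrev structMatrix : Matrix (Fin 2) (Fin 2) ℂ := !![1, 1; -1, -1]

theorem evMulC_eq (x y : Fin 2 → ℂ) :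
    evMulC structMatrix x y = splitForm x y • ![1, 1] := by
  ext k; fin_cases k <;> simp [evMulC, splitForm] <;> ring

variable (P : (Fin 2 → ℂ) →ₗ[ℂ] (Fin 2 → ℂ))

theorem isRotaBaxter_zero_iff :
    IsRotaBaxter structMatrix 0 P ↔ ∀ x y, splitForm (P x) (P y) • ![1, 1] =
      (splitForm x (P y) + splitForm (P x) y) • P ![1, 1] := by
  simp only [IsRotaBaxter, evMulC_eq, zero_smul, add_zero, ← add_smul, map_smul]

theorem apply_one_one_eq_zero_of_isRotaBaxter (h : IsRotaBaxter structMatrix 0 P) :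
    P ![1, 1] = 0 := by
  rw [isRotaBaxter_zero_iff] at h
  set v := P ![1, 1] with hv
  have hv_eq : v 1 = v 0 := by
    have h0 := congrFun (h ![1, 1] ![1, 1]) 0
    have h1 := congrFun (h ![1, 1] ![1, 1]) 1
    simp only [splitForm, Pi.smul_apply, smul_eq_mul, ← hv, Matrix.cons_val_zero,
      Matrix.cons_val_one, Matrix.cons_val_fin_one, mul_one, one_mul] at h0 h1
    have hsq : (v 0 - v 1) ^ 2 = 0 := by linear_combination (h1 - h0) / 2
    exact (sub_eq_zero.mp (pow_eq_zero_iff two_ne_zero |>.mp hsq)).symm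
  have hp : v 0 ^ 2 = 0 := by
    have h0 := congrFun (h ![1, 1] ![1, 0]) 0
    simp only [splitForm, Pi.smul_apply, smul_eq_mul, ← hv, hv_eq, Matrix.cons_val_zero,
      Matrix.cons_val_one, Matrix.cons_val_fin_one, mul_one, one_mul, mul_zero, sub_zero] at h0
    linear_combination -h0
  ext i; fin_cases i <;> simp [pow_eq_zero_iff two_ne_zero |>.mp hp, hv_eq]

theorem apply_one_one_eq_zero_iff : P ![1, 1] = 0 ↔ P ![0, 1] = -P ![1, 0] := by
  have hu : (![1, 1] : Fin 2 → ℂ) = ![1, 0] + ![0, 1] := by simp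
  rw [hu, map_add, add_eq_zero_iff_neg_eq, eq_comm]

theorem apply_eq_smul_of_apply_one_one (hu : P ![1, 1] = 0) (x : Fin 2 → ℂ) :
    P x = (x 0 - x 1) • P ![1, 0] := by
  have hx : x = (x 0 - x 1) • ![1, 0] + x 1 • ![1, 1] := by
    ext i; fin_cases i <;> simp
  rw [hx, map_add, map_smul, map_smul, hu, smul_zero, add_zero]
  simp

theorem isRotaBaxter_zero_iff_of_apply_one_one (hu : P ![1, 1] = 0) :
    IsRotaBaxter structMatrix 0 P ↔ splitForm (P ![1, 0]) (P ![1, 0]) = 0 := by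
  have hform (x y : Fin 2 → ℂ) : splitForm (P x) (P y) =
      (x 0 - x 1) * (y 0 - y 1) * splitForm (P ![1, 0]) (P ![1, 0]) := by
    rw [apply_eq_smul_of_apply_one_one P hu x, apply_eq_smul_of_apply_one_one P hu y]
    simp only [splitForm, Pi.smul_apply, smul_eq_mul]
    ring
  simp only [isRotaBaxter_zero_iff, hu, smul_zero]
  refine ⟨fun h => ?_, fun h x y => by rw [hform, h, mul_zero, zero_smul]⟩
  have h0 := congrFun (h ![1, 0] ![1, 0]) 0
  rw [hform] at h0
  simpa using h0

theorem isRotaBaxter_zero_iff_apply :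
    IsRotaBaxter structMatrix 0 P ↔
      P ![0, 1] = -P ![1, 0] ∧ splitForm (P ![1, 0]) (P ![1, 0]) = 0 := by
  rw [← apply_one_one_eq_zero_iff]
  constructor
  · intro h
    have hu := apply_one_one_eq_zero_of_isRotaBaxter P h
    exact ⟨hu, (isRotaBaxter_zero_iff_of_apply_one_one P hu).mp h⟩
  · rintro ⟨hu, h⟩
    exact (isRotaBaxter_zero_iff_of_apply_one_one P hu).mpr h

end E3

/-- Rota–Baxter operators of weight 0 on `E₃` (`e₁e₁ = e₁+e₂, e₂e₂ = -e₁-e₂`)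
are exactly those with matrix `((a,a),(-a,-a))` or `((a,-a),(-a,a))`. -/
theorem rb_weight0_E3 (P : (Fin 2 → ℂ) →ₗ[ℂ] (Fin 2 → ℂ)) :
    IsRotaBaxter !![1, 1; -1, -1] 0 P ↔
      ∃ a : ℂ,
        (P ![1, 0] = ![a, a] ∧ P ![0, 1] = ![-a, -a]) ∨
        (P ![1, 0] = ![a, -a] ∧ P ![0, 1] = ![-a, a]) := by
  rw [E3.isRotaBaxter_zero_iff_apply, splitForm_self_eq_zero_iff]
  constructor
  · rintro ⟨h01, a, h10 | h10⟩ <;> refine ⟨a, ?_⟩ <;> simp [h01, h10]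
  · rintro ⟨a, ⟨h10, h01⟩ | ⟨h10, h01⟩⟩ <;> simp [h01, h10]
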